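/- arXiv:1405.1812 — 2 statements merged into one kernel-verified Lean document; each statement's English description precedes it below -/
import Mathlib

section
/- For every finite simple graph G on n vertices, max{mp(G), α(G)} ≥ √n. -/
/-!
Order the vertices by degree, breaking ties by a fixed enumeration, and label each vertex `v`
with the number of vertices of a longest walk from `v` along which this order strictly increases.
Such walks are degree-monotone paths, so the labels lie in `[1, mp G]`. Of two adjacent vertices,
the lower one can be prepended to the longest walk from the higher one, so the labelling is a
proper colouring; its colour classes are independent, whence `n ≤ α(G) · mp(G) ≤ max(mp, α)²`.
-/

open SimpleGraph

/-- Degree of a vertex (as `ncard` of the neighbor set, avoiding decidability). -/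
noncomputable def gdeg {V : Type*} (G : SimpleGraph V) (v : V) : ℕ := (G.neighborSet v).ncard

/-- A walk is degree-monotone if the degrees along its support are monotone. -/
def DegMonotone {V : Type*} (G : SimpleGraph V) {u v : V} (p : G.Walk u v) : Prop :=
  List.Chain' (· ≤ ·) (p.support.map (gdeg G)) ∨
  List.Chain' (fun a b => b ≤ a) (p.support.map (gdeg G))

/-- `mp G`: the maximum number of vertices on a degree-monotone path of `G`. -/
noncomputable def mp {V : Type*} [Fintype V] (G : SimpleGraph V) : ℕ :=
  sSup {n | ∃ (u v : V) (p : G.Walk u v), p.IsPath ∧ DegMonotone G p ∧ p.support.length = n}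

/-- The independence number: the maximum size of an independent set of vertices. -/
noncomputable def indepNum {V : Type*} [Fintype V] (G : SimpleGraph V) : ℕ :=
  sSup {n | ∃ s : Finset V, (∀ x ∈ s, ∀ y ∈ s, ¬ G.Adj x y) ∧ s.card = n}

theorem card_le_indepNum_of_isIndepSet {V : Type*} [Fintype V] {G : SimpleGraph V} {s : Finset V}
    (hs : G.IsIndepSet s) : s.card ≤ _root_.indepNum G := by
  refine le_csSup ⟨Fintype.card V, ?_⟩ ⟨s, fun x hx y hy hxy ↦ hs hx hy hxy.ne hxy, rfl⟩
  rintro _ ⟨t, -, rfl⟩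
  exact t.card_le_univ

theorem SimpleGraph.Coloring.card_le_indepNum_mul_card {V α : Type*} [Fintype V] [DecidableEq α]
    {G : SimpleGraph V} (C : G.Coloring α) {s : Finset α} (hs : ∀ v, C v ∈ s) :
    Fintype.card V ≤ _root_.indepNum G * s.card :=
  Finset.card_le_mul_card_image_of_maps_to (fun v _ ↦ hs v) _ fun c _ ↦
    card_le_indepNum_of_isIndepSet <| by simpa [Coloring.colorClass] using C.isIndepSet_colorClass c

theorem length_support_le_mp {V : Type*} [Fintype V] {G : SimpleGraph V} {u v : V}
    {p : G.Walk u v} (hp : p.IsPath) (hm : DegMonotone G p) : p.support.length ≤ mp G := by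
  refine le_csSup ⟨Fintype.card V, ?_⟩ ⟨u, v, p, hp, hm, rfl⟩
  rintro _ ⟨_, _, q, hq, -, rfl⟩
  exact ((Walk.isPath_def _).mp hq).length_le_card

theorem SimpleGraph.Walk.isPath_of_isChain_map_lt {V α : Type*} [LinearOrder α]
    {G : SimpleGraph V} {r : V → α} {u v : V} {p : G.Walk u v}
    (hp : (p.support.map r).IsChain (· < ·)) : p.IsPath :=
  (Walk.isPath_def _).mpr ((List.isChain_iff_pairwise.mp hp).nodup.of_map r)

section IncreasingWalks

variable {V α : Type*} [LinearOrder α] (G : SimpleGraph V) (r : V → α)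

def increasingWalkLengths (v : V) : Set ℕ :=
  {n | ∃ w, ∃ p : G.Walk v w, (p.support.map r).IsChain (· < ·) ∧ p.support.length = n}

noncomputable def longestIncreasingWalk (v : V) : ℕ :=
  sSup (increasingWalkLengths G r v)

variable {G r}

theorem one_mem_increasingWalkLengths (v : V) : 1 ∈ increasingWalkLengths G r v :=
  ⟨v, .nil, by simp, rfl⟩

variable [Fintype V]

theorem bddAbove_increasingWalkLengths (v : V) : BddAbove (increasingWalkLengths G r v) := by
  refine ⟨Fintype.card V, ?_⟩
  rintro _ ⟨w, p, hp, rfl⟩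
  exact ((Walk.isPath_def _).mp (p.isPath_of_isChain_map_lt hp)).length_le_card

theorem one_le_longestIncreasingWalk (v : V) : 1 ≤ longestIncreasingWalk G r v :=
  le_csSup (bddAbove_increasingWalkLengths v) (one_mem_increasingWalkLengths v)

theorem longestIncreasingWalk_lt_of_adj {u v : V} (hadj : G.Adj u v) (huv : r u < r v) :
    longestIncreasingWalk G r v < longestIncreasingWalk G r u := by
  obtain ⟨w, p, hp, hlen⟩ :=
    Nat.sSup_mem ⟨1, one_mem_increasingWalkLengths (G := G) (r := r) v⟩
      (bddAbove_increasingWalkLengths v)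
  have hcons : longestIncreasingWalk G r v + 1 ∈ increasingWalkLengths G r u := by
    refine ⟨w, .cons hadj p, ?_, by simp [hlen, longestIncreasingWalk]⟩
    rw [← p.cons_tail_support] at hp
    rw [Walk.support_cons, ← p.cons_tail_support, List.map_cons, List.map_cons,
      List.isChain_cons_cons]
    exact ⟨huv, hp⟩
  exact le_csSup (bddAbove_increasingWalkLengths u) hcons

noncomputable def longestIncreasingWalkColoring (hr : Function.Injective r) : G.Coloring ℕ :=
  Coloring.mk (longestIncreasingWalk G r) fun {u v} hadj ↦ by
    rcases lt_or_gt_of_ne (hr.ne hadj.ne) with h | h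
    · exact (longestIncreasingWalk_lt_of_adj hadj h).ne'
    · exact (longestIncreasingWalk_lt_of_adj hadj.symm h).ne

theorem longestIncreasingWalk_le_mp (hdeg : ∀ ⦃u v⦄, r u < r v → gdeg G u ≤ gdeg G v)
    (v : V) : longestIncreasingWalk G r v ≤ mp G := by
  refine csSup_le ⟨1, one_mem_increasingWalkLengths v⟩ ?_
  rintro _ ⟨w, p, hp, rfl⟩
  refine length_support_le_mp (p.isPath_of_isChain_map_lt hp) (Or.inl ?_)
  rw [List.isChain_map] at hp
  exact List.isChain_map_of_isChain _ (fun _ _ h ↦ hdeg h) hp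

end IncreasingWalks

noncomputable def degreeKey {V : Type*} [Fintype V] (G : SimpleGraph V) (v : V) :
    ℕ ×ₗ Fin (Fintype.card V) :=
  toLex (gdeg G v, Fintype.equivFin V v)

theorem degreeKey_injective {V : Type*} [Fintype V] (G : SimpleGraph V) :
    Function.Injective (degreeKey G) := fun _ _ h ↦
  (Fintype.equivFin V).injective (congrArg Prod.snd (toLex.injective h))

theorem gdeg_le_of_degreeKey_lt {V : Type*} [Fintype V] {G : SimpleGraph V} {u v : V}
    (h : degreeKey G u < degreeKey G v) : gdeg G u ≤ gdeg G v :=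
  Prod.Lex.monotone_fst _ _ h.le

theorem card_le_indepNum_mul_mp {V : Type*} [Fintype V] (G : SimpleGraph V) :
    Fintype.card V ≤ _root_.indepNum G * mp G := by
  have hrange (v : V) : longestIncreasingWalk G (degreeKey G) v ∈ Finset.Icc 1 (mp G) :=
    Finset.mem_Icc.mpr ⟨one_le_longestIncreasingWalk v,
      longestIncreasingWalk_le_mp (fun _ _ ↦ gdeg_le_of_degreeKey_lt) v⟩
  simpa using
    (longestIncreasingWalkColoring (degreeKey_injective G)).card_le_indepNum_mul_card hrange

/-- For every finite simple graph `G` on `n` vertices, `max {mp(G), α(G)} ≥ √n`. -/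
theorem max_mp_indepNum_ge_sqrt {V : Type*} [Fintype V] (G : SimpleGraph V) :
    Real.sqrt (Fintype.card V) ≤ (max (mp G) (_root_.indepNum G) : ℝ) := by
  have hcard : Fintype.card V ≤ max (mp G) (_root_.indepNum G) ^ 2 :=
    (card_le_indepNum_mul_mp G).trans <| by
      rw [sq]; exact Nat.mul_le_mul (le_max_right _ _) (le_max_left _ _)
  rw [Real.sqrt_le_left (by positivity)]
  exact_mod_cast hcard
end

section
/- For even n ≥ 4, f(n,3) = n²/4 − 1, attained by K_{n/2+1, n/2−1}; for odd n ≥ 3, f(n,3) = (n²−1)/4, attained by K_{(n+1)/2,(n−1)/2}. -/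
open SimpleGraph

/-- The Turán number `t(n,k)`: the maximum number of edges of a `K_k`-free graph
on `n` vertices. -/
noncomputable def turanNum (n k : ℕ) : ℕ :=
  sSup {m | ∃ G : SimpleGraph (Fin n), G.CliqueFree k ∧ G.edgeSet.ncard = m}

/-- `f(n,k)`: the maximum number of edges of a graph on `n` vertices with no
degree-monotone path on `k` vertices. -/
noncomputable def mpEx (n k : ℕ) : ℕ :=
  sSup {m | ∃ G : SimpleGraph (Fin n), mp G < k ∧ G.edgeSet.ncard = m}

/-!
If `mp G < 3`, then along every path `x - y - z` the middle degree is strictly above or strictly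
below both ends; in particular `G` is triangle-free. For a vertex `v` of maximum degree `Δ`, the
neighbourhood of `v` is independent, so its vertices have degree at most `n - Δ`, and summing
degrees gives `e ≤ Δ (n - Δ)`. This is at most `⌊n² / 4⌋`, and at most `n² / 4 - 1` for even `n`
unless `n = 2Δ`. In that balanced case `v` is a strict local maximum of the degree, so its
neighbours have degree at most `Δ - 1`, whence `2 e ≤ Δ (n - 1)` and `4 e ≤ n (n - 1) ≤ n² - 4`.
Conversely, in `K_{a,b}` with `a ≠ b` the degrees alternate between two distinct values along
every path, so `mp = 2`.
-/

lemma Nat.sq_div_four_sub_one_eq {n : ℕ} (hn : Even n) :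
    n ^ 2 / 4 - 1 = (n / 2 + 1) * (n / 2 - 1) := by
  obtain ⟨k, rfl⟩ := hn
  rw [show (k + k) / 2 = k by omega, ← Nat.mul_self_sub_mul_self_eq]
  ring_nf
  omega

lemma Nat.sq_sub_one_div_four_eq {n : ℕ} (hn : Odd n) :
    (n ^ 2 - 1) / 4 = (n + 1) / 2 * ((n - 1) / 2) := by
  obtain ⟨k, rfl⟩ := hn
  rw [show (2 * k + 1 + 1) / 2 = k + 1 by omega, show (2 * k + 1 - 1) / 2 = k by omega]
  ring_nf
  omega

lemma Nat.four_mul_mul_add_one_le_sq {a b : ℕ} (h : Odd (a + b)) :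
    4 * (a * b) + 1 ≤ (a + b) ^ 2 := by
  wlog hab : a ≤ b generalizing a b
  · simpa only [add_comm, mul_comm] using this (by rwa [add_comm]) (le_of_not_ge hab)
  obtain ⟨d, rfl⟩ := Nat.exists_eq_add_of_le hab
  obtain ⟨k, hk⟩ := h
  have hd : 1 ≤ d := by omega
  nlinarith

lemma Nat.four_mul_mul_add_four_le_sq {a b : ℕ} (h : Even (a + b)) (hne : a ≠ b) :
    4 * (a * b) + 4 ≤ (a + b) ^ 2 := by
  wlog hab : a ≤ b generalizing a b
  · simpa only [add_comm, mul_comm] using this (by rwa [add_comm]) hne.symm (le_of_not_ge hab)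
  obtain ⟨d, rfl⟩ := Nat.exists_eq_add_of_le hab
  obtain ⟨k, hk⟩ := h
  have hd : 2 ≤ d := by omega
  nlinarith

namespace SimpleGraph

open Finset Fintype

variable {V W : Type*} {G : SimpleGraph V} {H : SimpleGraph W}

lemma gdeg_eq_degree [Fintype V] [DecidableRel G.Adj] (v : V) : gdeg G v = G.degree v := by
  rw [gdeg, ← card_neighborSet_eq_degree, Set.ncard_eq_toFinset_card', Set.toFinset_card]

lemma Iso.gdeg_eq (f : G ≃g H) (v : V) : gdeg H (f v) = gdeg G v := by
  rw [gdeg, gdeg, ← Nat.card_coe_set_eq, ← Nat.card_coe_set_eq]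
  exact (Nat.card_congr (f.mapNeighborSet v)).symm

lemma Iso.ncard_edgeSet_eq (f : G ≃g H) : H.edgeSet.ncard = G.edgeSet.ncard := by
  rw [← Nat.card_coe_set_eq, ← Nat.card_coe_set_eq]
  exact (Nat.card_congr f.mapEdgeSet).symm

section mp

variable [Fintype V] [Fintype W]

lemma le_mp {u v : V} (p : G.Walk u v) (hp : p.IsPath) (hm : DegMonotone G p) :
    p.support.length ≤ mp G :=
  le_csSup ⟨card V, by rintro _ ⟨_, _, q, hq, -, rfl⟩; exact hq.support_nodup.length_le_card⟩
    ⟨u, v, p, hp, hm, rfl⟩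

lemma Iso.mp_le (f : G ≃g H) : mp G ≤ mp H := by
  refine csSup_le' ?_
  rintro _ ⟨u, v, p, hp, hm, rfl⟩
  have hdeg : gdeg H ∘ f.toHom = gdeg G := funext f.gdeg_eq
  simpa using le_mp (p.map f.toHom) (hp.map f.injective)
    (by rwa [DegMonotone, Walk.support_map, List.map_map, hdeg])

lemma Iso.mp_eq (f : G ≃g H) : mp G = mp H := le_antisymm f.mp_le f.symm.mp_le

lemma two_le_mp_of_adj {u v : V} (h : G.Adj u v) : 2 ≤ mp G := by
  have hm : DegMonotone G (.cons h .nil) := by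
    rcases le_total (gdeg G u) (gdeg G v) with huv | hvu
    · exact .inl (.cons_cons huv (.singleton _))
    · exact .inr (.cons_cons hvu (.singleton _))
  simpa using le_mp _ (by simp [h.ne]) hm

lemma mp_lt_three_iff : mp G < 3 ↔ ∀ ⦃x y z : V⦄, G.Adj x y → G.Adj y z → x ≠ z →
    gdeg G x ≤ gdeg G y → gdeg G z < gdeg G y := by
  refine ⟨fun h x y z hxy hyz hxz hle => ?_, fun H => Nat.lt_succ_of_le (csSup_le' ?_)⟩
  · by_contra! hge
    have hm : DegMonotone G (.cons hxy (.cons hyz .nil)) :=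
      .inl (.cons_cons hle (.cons_cons hge (.singleton _)))
    have : 3 ≤ mp G := by simpa using le_mp _ (by simp [hxy.ne, hyz.ne, hxz]) hm
    omega
  · rintro _ ⟨x, _, p, hp, hm, rfl⟩
    match p, hp, hm with
    | .nil, _, _ => simp
    | .cons _ .nil, _, _ => simp
    | .cons (v := y) hxy (.cons (v := z) hyz q), hp, hm =>
      have hxz : x ≠ z := fun h => ((Walk.cons_isPath_iff _ _).1 hp).2
        (by rw [h]; exact List.mem_cons_of_mem _ q.start_mem_support)
      change List.IsChain _ _ ∨ List.IsChain _ _ at hm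
      rw [Walk.support_cons, Walk.support_cons, ← q.cons_tail_support] at hm
      simp only [List.map_cons, List.isChain_cons_cons] at hm
      rcases hm with ⟨h₁, h₂, -⟩ | ⟨h₁, h₂, -⟩
      · exact absurd h₂ (H hxy hyz hxz h₁).not_ge
      · exact absurd h₁ (H hyz.symm hxy.symm hxz.symm h₂).not_ge

lemma cliqueFree_three_of_mp_lt_three (h : mp G < 3) : G.CliqueFree 3 := by
  classical
  intro s hs
  obtain ⟨a, b, c, hab, hac, hbc, -⟩ := is3Clique_iff.1 hs
  have H := mp_lt_three_iff.1 h
  -- one of the six orderings of the triangle is degree-monotone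
  have := H hab hbc hac.ne
  have := H hac hbc.symm hab.ne
  have := H hab.symm hac hbc.ne
  have := H hbc hac.symm hab.ne.symm
  have := H hac.symm hab hbc.ne.symm
  have := H hbc.symm hab.symm hac.ne.symm
  omega

end mp

section degree

variable [Fintype V] [DecidableRel G.Adj] {v : V}

lemma degree_le_card_sub_degree_of_adj (h : G.CliqueFree 3) ⦃u : V⦄ (hu : G.Adj v u) :
    G.degree u ≤ card V - G.degree v := by
  classical
  rw [← card_neighborFinset_eq_degree, ← card_neighborFinset_eq_degree, ← card_compl]
  refine card_le_card fun w hw => mem_compl.2 fun hw' => ?_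
  rw [mem_neighborFinset] at hw hw'
  exact isIndepSet_neighborSet_of_triangleFree G h v hu hw' hw.ne hw

lemma degree_lt_of_adj_of_mp_lt_three (h : mp G < 3) (hv : ∀ u, G.degree u ≤ G.degree v)
    (h₂ : 2 ≤ G.degree v) {u : V} (hu : G.Adj v u) : G.degree u < G.degree v := by
  obtain ⟨x, hx, hxu⟩ := exists_mem_ne
    (by rwa [card_neighborFinset_eq_degree] : 1 < #(G.neighborFinset v)) u
  have hx : G.Adj x v := ((mem_neighborFinset _ _ _).1 hx).symm
  simpa only [gdeg_eq_degree] using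
    mp_lt_three_iff.1 h hx hu hxu (by simpa only [gdeg_eq_degree] using hv x)

lemma two_mul_card_edgeFinset_le (hv : ∀ u, G.degree u ≤ G.degree v) {b : ℕ}
    (hb : ∀ ⦃u⦄, G.Adj v u → G.degree u ≤ b) :
    2 * #G.edgeFinset ≤ G.degree v * b + (card V - G.degree v) * G.degree v := by
  classical
  rw [← sum_degrees_eq_twice_card_edges, ← sum_add_sum_compl (G.neighborFinset v)]
  gcongr
  · simpa [card_neighborFinset_eq_degree] using
      sum_le_card_nsmul _ _ _ fun _ hu => hb ((mem_neighborFinset _ _ _).1 hu)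
  · simpa [card_compl, card_neighborFinset_eq_degree] using
      sum_le_card_nsmul (G.neighborFinset v)ᶜ _ _ fun u _ => hv u

end degree

section edgeBound

variable [Fintype V]

lemma CliqueFree.card_edgeFinset_le_degree_mul [DecidableRel G.Adj] (h : G.CliqueFree 3) {v : V}
    (hv : ∀ u, G.degree u ≤ G.degree v) :
    #G.edgeFinset ≤ G.degree v * (card V - G.degree v) := by
  have := two_mul_card_edgeFinset_le hv (degree_le_card_sub_degree_of_adj h)
  linarith [mul_comm (card V - G.degree v) (G.degree v)]

lemma exists_forall_degree_le [DecidableRel G.Adj] [Nonempty V] :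
    ∃ v : V, ∀ u, G.degree u ≤ G.degree v := by
  obtain ⟨v, hv⟩ := G.exists_maximal_degree_vertex
  exact ⟨v, fun u => hv ▸ G.degree_le_maxDegree u⟩

theorem ncard_edgeSet_le_sq_sub_one_div_four (h : mp G < 3) (hV : Odd (card V)) :
    G.edgeSet.ncard ≤ (card V ^ 2 - 1) / 4 := by
  classical
  have : Nonempty V := card_pos_iff.1 hV.pos
  obtain ⟨v, hmax⟩ := G.exists_forall_degree_le
  obtain ⟨m, hm⟩ := Nat.exists_eq_add_of_le (G.degree_lt_card_verts v).le
  have hle := (cliqueFree_three_of_mp_lt_three h).card_edgeFinset_le_degree_mul hmax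
  rw [hm, Nat.add_sub_cancel_left] at hle
  rw [hm] at hV ⊢
  have := Nat.four_mul_mul_add_one_le_sq hV
  rw [← coe_edgeFinset, Set.ncard_coe_finset]
  omega

theorem ncard_edgeSet_le_sq_div_four_sub_one (h : mp G < 3) (hV : Even (card V))
    (h4 : 4 ≤ card V) : G.edgeSet.ncard ≤ card V ^ 2 / 4 - 1 := by
  classical
  have : Nonempty V := card_pos_iff.1 (by omega)
  obtain ⟨v, hmax⟩ := G.exists_forall_degree_le
  obtain ⟨m, hm⟩ := Nat.exists_eq_add_of_le (G.degree_lt_card_verts v).le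
  rw [← coe_edgeFinset, Set.ncard_coe_finset, hm]
  by_cases hΔ : G.degree v = m
  · -- here `Δ (n - Δ) = n² / 4`, so the triangle-free bound alone is not enough
    have hsharp := two_mul_card_edgeFinset_le hmax
      fun _ hu => Nat.le_sub_one_of_lt (degree_lt_of_adj_of_mp_lt_three h hmax (by omega) hu)
    rw [hm, Nat.add_sub_cancel_left, hΔ] at hsharp
    rw [hΔ]
    obtain ⟨c, rfl⟩ : ∃ c, m = c + 1 := ⟨m - 1, by omega⟩
    rw [Nat.add_sub_cancel] at hsharp
    ring_nf at hsharp ⊢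
    omega
  · have hle := (cliqueFree_three_of_mp_lt_three h).card_edgeFinset_le_degree_mul hmax
    rw [hm, Nat.add_sub_cancel_left] at hle
    rw [hm] at hV
    have := Nat.four_mul_mul_add_four_le_sq hV hΔ
    omega

end edgeBound

section completeBipartiteGraph

variable {α β : Type*}

lemma gdeg_completeBipartiteGraph_inl [Fintype β] (a : α) :
    gdeg (completeBipartiteGraph α β) (.inl a) = card β := by
  have : (completeBipartiteGraph α β).neighborSet (.inl a) = Set.range Sum.inr := by
    ext (x | x) <;> simp
  rw [gdeg, this, Set.ncard_range_of_injective Sum.inr_injective, Nat.card_eq_fintype_card]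

lemma gdeg_completeBipartiteGraph_inr [Fintype α] (b : β) :
    gdeg (completeBipartiteGraph α β) (.inr b) = card α := by
  have : (completeBipartiteGraph α β).neighborSet (.inr b) = Set.range Sum.inl := by
    ext (x | x) <;> simp
  rw [gdeg, this, Set.ncard_range_of_injective Sum.inl_injective, Nat.card_eq_fintype_card]

lemma ncard_edgeSet_completeBipartiteGraph [Fintype α] [Fintype β] :
    (completeBipartiteGraph α β).edgeSet.ncard = card α * card β := by
  simp [Set.ncard_def, encard_edgeSet_completeBipartiteGraph]

lemma mp_completeBipartiteGraph [Fintype α] [Fintype β] [Nonempty α] [Nonempty β]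
    (h : card α ≠ card β) :
    mp (completeBipartiteGraph α β) = 2 := by
  refine le_antisymm (Nat.le_of_lt_succ (mp_lt_three_iff.2 ?_)) ?_
  · rintro (x | x) (y | y) (z | z) hxy hyz - <;>
      simp_all [gdeg_completeBipartiteGraph_inl, gdeg_completeBipartiteGraph_inr] <;> omega
  · obtain ⟨a⟩ := ‹Nonempty α›
    obtain ⟨b⟩ := ‹Nonempty β›
    exact two_le_mp_of_adj (show (completeBipartiteGraph α β).Adj (.inl a) (.inr b) by simp)

end completeBipartiteGraph

end SimpleGraph

lemma mpEx_eq_of_forall_le {n k m : ℕ}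
    (hle : ∀ G : SimpleGraph (Fin n), mp G < k → G.edgeSet.ncard ≤ m)
    {W : Type*} [Fintype W] (H : SimpleGraph W) (hW : Fintype.card W = n) (hH : mp H < k)
    (hm : H.edgeSet.ncard = m) : mpEx n k = m := by
  have hbound :
      m ∈ upperBounds {m | ∃ G : SimpleGraph (Fin n), mp G < k ∧ G.edgeSet.ncard = m} := by
    rintro _ ⟨G, hG, rfl⟩
    exact hle G hG
  let f := Iso.map (Fintype.equivFinOfCardEq hW) H
  exact le_antisymm (csSup_le' hbound)
    (le_csSup ⟨m, hbound⟩ ⟨_, f.mp_eq ▸ hH, f.ncard_edgeSet_eq.trans hm⟩)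

lemma mpEx_three_eq_mul_of_le {n a b : ℕ} (hab : a + b = n) (ha : 0 < a) (hb : 0 < b)
    (hne : a ≠ b) (hle : ∀ G : SimpleGraph (Fin n), mp G < 3 → G.edgeSet.ncard ≤ a * b) :
    mpEx n 3 = a * b ∧ mp (completeBipartiteGraph (Fin a) (Fin b)) = 2 ∧
      (completeBipartiteGraph (Fin a) (Fin b)).edgeSet.ncard = a * b := by
  have : NeZero a := ⟨ha.ne'⟩
  have : NeZero b := ⟨hb.ne'⟩
  have hmp : mp (completeBipartiteGraph (Fin a) (Fin b)) = 2 :=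
    mp_completeBipartiteGraph (by simpa using hne)
  have hK : (completeBipartiteGraph (Fin a) (Fin b)).edgeSet.ncard = a * b := by
    simp [ncard_edgeSet_completeBipartiteGraph]
  exact ⟨mpEx_eq_of_forall_le hle _ (by simpa using hab) (by omega) hK, hmp, hK⟩

/-- Values of `f(n,3)`: for even `n ≥ 4`, `f(n,3) = n²/4 − 1`, attained by
`K_{n/2+1, n/2−1}`; for odd `n ≥ 3`, `f(n,3) = (n²−1)/4`, attained by
`K_{(n+1)/2, (n−1)/2}`. -/
theorem mpEx_three (n : ℕ) (hn : 3 ≤ n) :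
    (Even n → mpEx n 3 = n ^ 2 / 4 - 1 ∧
      mp (completeBipartiteGraph (Fin (n / 2 + 1)) (Fin (n / 2 - 1))) = 2 ∧
      (completeBipartiteGraph (Fin (n / 2 + 1)) (Fin (n / 2 - 1))).edgeSet.ncard =
        n ^ 2 / 4 - 1) ∧
    (Odd n → mpEx n 3 = (n ^ 2 - 1) / 4 ∧
      mp (completeBipartiteGraph (Fin ((n + 1) / 2)) (Fin ((n - 1) / 2))) = 2 ∧
      (completeBipartiteGraph (Fin ((n + 1) / 2)) (Fin ((n - 1) / 2))).edgeSet.ncard =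
        (n ^ 2 - 1) / 4) := by
  constructor
  · intro hev
    have := Nat.even_iff.1 hev
    rw [Nat.sq_div_four_sub_one_eq hev]
    refine mpEx_three_eq_mul_of_le (by omega) (by omega) (by omega) (by omega) fun G hG => ?_
    rw [← Nat.sq_div_four_sub_one_eq hev]
    simpa using ncard_edgeSet_le_sq_div_four_sub_one hG (by simpa) (by simp; omega)
  · intro hodd
    have := Nat.odd_iff.1 hodd
    rw [Nat.sq_sub_one_div_four_eq hodd]
    refine mpEx_three_eq_mul_of_le (by omega) (by omega) (by omega) (by omega) fun G hG => ?_
    rw [← Nat.sq_sub_one_div_four_eq hodd]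
    simpa using ncard_edgeSet_le_sq_sub_one_div_four hG (by simpa)
end
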